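/- arXiv:1507.05115 — 2 statements merged into one kernel-verified Lean document; each statement's English description precedes it below -/
import Mathlib

section
/- For Δ > 0 and M > 0, the infimum of ∫₀^A F(t) dt over all A > 0 and all measurable F: [0,∞) → ℝ with F(t) ≥ Δ on [0,A], F(t) = 0 for t > A, and ∫₀^∞ t·F(t) dt ≥ M, equals √(2MΔ). Moreover, the infimum is attained exactly when F(t) = Δ for almost all t ≤ A and A = √(2M/Δ). -/
open Real MeasureTheory

/-!
Since `F ≥ Δ` on `[0, A]`, the weight `A - t` gives `∫₀^A (A - t)(F t - Δ) dt ≥ 0`, i.e.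
`M + Δ A² / 2 ≤ ∫₀^A t F(t) dt + Δ A² / 2 ≤ A ∫₀^A F`. By AM-GM, `M + Δ A² / 2 ≥ √(2MΔ) A`,
with equality exactly when `Δ A = √(2MΔ)`. Hence `∫₀^A F ≥ √(2MΔ)`; in the equality case
`A = √(2M/Δ)` and `∫₀^A F = Δ A`, which forces `F = Δ` almost everywhere on `[0, A]`.
The constant `Δ` on `[0, √(2M/Δ)]` attains the bound.
-/

section

open Set

theorem setIntegral_Ioi_eq_intervalIntegral {f : ℝ → ℝ} {a b : ℝ} (hab : a ≤ b)
    (hf : ∀ t, b < t → f t = 0) : ∫ t in Ioi a, f t = ∫ t in a..b, f t := by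
  rw [intervalIntegral.integral_of_le hab]
  exact setIntegral_eq_of_subset_of_forall_sdiff_eq_zero measurableSet_Ioi Ioc_subset_Ioi_self
    fun t ht => hf t (not_le.1 fun htb => ht.2 ⟨ht.1, htb⟩)

theorem intervalIntegral_eq_mul_sub_iff_ae_eq {F : ℝ → ℝ} {a b c : ℝ} (hab : a ≤ b)
    (hF : IntervalIntegrable F volume a b) (hcF : ∀ t ∈ Icc a b, c ≤ F t) :
    ∫ t in a..b, F t = c * (b - a) ↔ ∀ᵐ t ∂volume.restrict (Icc a b), F t = c := by
  have hsub : ∫ t in a..b, (F t - c) = (∫ t in a..b, F t) - c * (b - a) := by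
    rw [intervalIntegral.integral_sub hF intervalIntegrable_const, intervalIntegral.integral_const,
      smul_eq_mul, mul_comm]
  have hnonneg : 0 ≤ᵐ[volume.restrict (Ioc a b)] fun t => F t - c :=
    (ae_restrict_iff' measurableSet_Ioc).2 <| ae_of_all _ fun t ht =>
      sub_nonneg.2 (hcF t (Ioc_subset_Icc_self ht))
  rw [← sub_eq_zero, ← hsub, intervalIntegral.integral_eq_zero_iff_of_le_of_nonneg_ae hab hnonneg
    (hF.sub intervalIntegrable_const), Measure.restrict_congr_set Ioc_ae_eq_Icc]
  simp only [Filter.EventuallyEq, Pi.zero_apply, sub_eq_zero]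

theorem intervalIntegral_mul_add_le_mul_intervalIntegral {F : ℝ → ℝ} {Δ A : ℝ} (hA : 0 ≤ A)
    (hF : IntervalIntegrable F volume 0 A) (hΔF : ∀ t ∈ Icc 0 A, Δ ≤ F t) :
    (∫ t in 0..A, t * F t) + Δ * A ^ 2 / 2 ≤ A * ∫ t in 0..A, F t := by
  have hweight : Continuous fun t : ℝ => (A - t) * Δ := by fun_prop
  have hpointwise : ∀ t ∈ Icc 0 A, t * F t ≤ A * F t - (A - t) * Δ := fun t ht => by
    nlinarith [hΔF t ht, ht.2]
  have hmono := intervalIntegral.integral_mono_on hA (hF.continuousOn_mul continuousOn_id)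
    ((hF.const_mul A).sub (hweight.intervalIntegrable 0 A)) hpointwise
  rw [intervalIntegral.integral_sub (hF.const_mul A) (hweight.intervalIntegrable 0 A),
    intervalIntegral.integral_const_mul, intervalIntegral.integral_mul_const,
    intervalIntegral.integral_comp_sub_left fun t => t, integral_id] at hmono
  simp only [id, sub_zero, sub_self] at hmono
  linarith

theorem two_mul_mul_add_sub_sqrt_mul_eq_sq {Δ M : ℝ} (h : 0 ≤ 2 * M * Δ) (A : ℝ) :
    2 * Δ * (M + Δ * A ^ 2 / 2 - √(2 * M * Δ) * A) = (Δ * A - √(2 * M * Δ)) ^ 2 := by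
  linear_combination (-1 : ℝ) * sq_sqrt h

theorem sqrt_two_mul_mul_eq_mul_sqrt_div {Δ : ℝ} (M : ℝ) (hΔ : 0 < Δ) :
    √(2 * M * Δ) = Δ * √(2 * M / Δ) := by
  rw [show 2 * M * Δ = Δ ^ 2 * (2 * M / Δ) by field_simp, sqrt_mul (sq_nonneg Δ),
    sqrt_sq hΔ.le]

variable {Δ M A : ℝ} {F : ℝ → ℝ}

theorem sqrt_two_mul_mul_le_intervalIntegral (hΔ : 0 < Δ) (hM : 0 ≤ M) (hA : 0 < A)
    (hF : IntervalIntegrable F volume 0 A) (hΔF : ∀ t ∈ Icc 0 A, Δ ≤ F t)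
    (hMF : M ≤ ∫ t in 0..A, t * F t) :
    √(2 * M * Δ) ≤ ∫ t in 0..A, F t := by
  have hmass := intervalIntegral_mul_add_le_mul_intervalIntegral hA.le hF hΔF
  have hamgm : √(2 * M * Δ) * A ≤ M + Δ * A ^ 2 / 2 := by
    have hsq := two_mul_mul_add_sub_sqrt_mul_eq_sq (by positivity : 0 ≤ 2 * M * Δ) A
    exact sub_nonneg.1 <| nonneg_of_mul_nonneg_right (hsq ▸ sq_nonneg _) (by positivity)
  refine le_of_mul_le_mul_left ?_ hA
  linarith

theorem intervalIntegral_eq_sqrt_two_mul_mul_iff (hΔ : 0 < Δ) (hM : 0 ≤ M) (hA : 0 < A)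
    (hF : IntervalIntegrable F volume 0 A) (hΔF : ∀ t ∈ Icc 0 A, Δ ≤ F t)
    (hMF : M ≤ ∫ t in 0..A, t * F t) :
    ∫ t in 0..A, F t = √(2 * M * Δ) ↔
      A = √(2 * M / Δ) ∧ ∀ᵐ t ∂volume.restrict (Icc 0 A), F t = Δ := by
  have hs := sqrt_two_mul_mul_eq_mul_sqrt_div M hΔ
  rw [← intervalIntegral_eq_mul_sub_iff_ae_eq hA.le hF hΔF, sub_zero]
  constructor
  · intro hI
    have hmass := intervalIntegral_mul_add_le_mul_intervalIntegral hA.le hF hΔF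
    have hamgm := two_mul_mul_add_sub_sqrt_mul_eq_sq (by positivity : 0 ≤ 2 * M * Δ) A
    have hsq : (Δ * A - √(2 * M * Δ)) ^ 2 = 0 := by
      refine le_antisymm ?_ (sq_nonneg _)
      rw [← hamgm]
      exact mul_nonpos_of_nonneg_of_nonpos (by positivity) (by rw [hI] at hmass; linarith)
    have hΔA : Δ * A = √(2 * M * Δ) := sub_eq_zero.1 (pow_eq_zero_iff two_ne_zero |>.1 hsq)
    exact ⟨mul_left_cancel₀ hΔ.ne' (hΔA.trans hs), hI.trans hΔA.symm⟩
  · rintro ⟨rfl, hI⟩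
    rw [hI, hs]

theorem exists_measurable_eq_on_Icc_sqrt (hΔ : 0 < Δ) (hM : 0 ≤ M) :
    ∃ F : ℝ → ℝ, Measurable F ∧ (∀ t ∈ Icc 0 √(2 * M / Δ), F t = Δ) ∧
      (∀ t, √(2 * M / Δ) < t → F t = 0) ∧ IntegrableOn F (Ioi 0) ∧
      ∫ t in Ioi 0, t * F t = M := by
  set A₀ := √(2 * M / Δ)
  have hA₀ : 0 ≤ A₀ := sqrt_nonneg _
  have hA₀sq : A₀ ^ 2 = 2 * M / Δ := sq_sqrt (by positivity)
  set F₀ := (Icc 0 A₀).indicator fun _ => Δ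
  have hF₀ : ∀ t ∈ Icc 0 A₀, F₀ t = Δ := fun t ht => indicator_of_mem ht _
  have hF₀0 : ∀ t, A₀ < t → F₀ t = 0 := fun t ht =>
    indicator_of_notMem (fun h => (not_le.2 ht) h.2) _
  refine ⟨F₀, measurable_const.indicator measurableSet_Icc, hF₀, hF₀0,
    ((integrableOn_const (C := Δ) (by simp)).integrable_indicator measurableSet_Icc).integrableOn,
    ?_⟩
  rw [setIntegral_Ioi_eq_intervalIntegral hA₀ fun t ht => by rw [hF₀0 t ht, mul_zero],
    intervalIntegral.integral_congr (g := fun t => t * Δ) fun t ht => by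
      rw [hF₀ t (uIcc_of_le hA₀ ▸ ht)],
    intervalIntegral.integral_mul_const, integral_id, hA₀sq]
  field_simp
  ring

end

/-- The variational identity (5): for `Δ, M > 0`,
`inf { ∫₀^A F : A > 0, F ≥ Δ on [0,A], F = 0 beyond A, ∫₀^∞ t F(t) dt ≥ M } = √(2MΔ)`,
and the infimum is attained exactly when `F = Δ` a.e. on `[0,A]` and `A = √(2M/Δ)`. -/
theorem variational_inf_eq (Δ M : ℝ) (hΔ : 0 < Δ) (hM : 0 < M) :
    (sInf {y : ℝ | ∃ A > (0 : ℝ), ∃ F : ℝ → ℝ, Measurable F ∧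
        (∀ t ∈ Set.Icc (0 : ℝ) A, Δ ≤ F t) ∧ (∀ t, A < t → F t = 0) ∧
        IntegrableOn F (Set.Ioi (0 : ℝ)) ∧
        M ≤ (∫ t in Set.Ioi (0 : ℝ), t * F t) ∧
        y = ∫ t in (0 : ℝ)..A, F t}
      = Real.sqrt (2 * M * Δ)) ∧
    ∀ A > (0 : ℝ), ∀ F : ℝ → ℝ, Measurable F →
      (∀ t ∈ Set.Icc (0 : ℝ) A, Δ ≤ F t) → (∀ t, A < t → F t = 0) →
      IntegrableOn F (Set.Ioi (0 : ℝ)) →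
      M ≤ (∫ t in Set.Ioi (0 : ℝ), t * F t) →
      ((∫ t in (0 : ℝ)..A, F t) = Real.sqrt (2 * M * Δ) ↔
        (A = Real.sqrt (2 * M / Δ) ∧
          ∀ᵐ t ∂(volume.restrict (Set.Icc (0 : ℝ) A)), F t = Δ)) := by
  have to_interval : ∀ A > (0 : ℝ), ∀ F : ℝ → ℝ, (∀ t, A < t → F t = 0) →
      IntegrableOn F (Set.Ioi 0) → M ≤ (∫ t in Set.Ioi 0, t * F t) →
      IntervalIntegrable F volume 0 A ∧ M ≤ ∫ t in 0..A, t * F t := fun A hA F hF0 hF hMF =>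
    ⟨(intervalIntegrable_iff_integrableOn_Ioc_of_le hA.le).2 (hF.mono_set Set.Ioc_subset_Ioi_self),
      hMF.trans_eq (setIntegral_Ioi_eq_intervalIntegral hA.le fun t ht => by
        rw [hF0 t ht, mul_zero])⟩
  refine ⟨IsLeast.csInf_eq ⟨?_, ?_⟩, fun A hA F _ hΔF hF0 hF hMF => ?_⟩
  · obtain ⟨F₀, hF₀m, hF₀, hF₀0, hF₀int, hmoment⟩ := exists_measurable_eq_on_Icc_sqrt hΔ hM.le
    have hA₀ : 0 < √(2 * M / Δ) := sqrt_pos.2 (by positivity)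
    have hΔF₀ : ∀ t ∈ Set.Icc 0 √(2 * M / Δ), Δ ≤ F₀ t := fun t ht => (hF₀ t ht).ge
    obtain ⟨hF₀', hMF₀⟩ := to_interval _ hA₀ F₀ hF₀0 hF₀int hmoment.ge
    refine ⟨_, hA₀, F₀, hF₀m, hΔF₀, hF₀0, hF₀int, hmoment.ge,
      ((intervalIntegral_eq_sqrt_two_mul_mul_iff hΔ hM.le hA₀ hF₀' hΔF₀ hMF₀).2
        ⟨rfl, (ae_restrict_iff' measurableSet_Icc).2 (ae_of_all _ hF₀)⟩).symm⟩
  · rintro y ⟨A, hA, F, -, hΔF, hF0, hF, hMF, rfl⟩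
    obtain ⟨hF, hMF⟩ := to_interval A hA F hF0 hF hMF
    exact sqrt_two_mul_mul_le_intervalIntegral hΔ hM.le hA hF hΔF hMF
  · obtain ⟨hF, hMF⟩ := to_interval A hA F hF0 hF hMF
    exact intervalIntegral_eq_sqrt_two_mul_mul_iff hΔ hM.le hA hF hΔF hMF
end

section
/- In ℝ², let D₁, …, D_m be closed disks with radii r₁, …, r_m forming a non-separable arrangement (no line of ℝ² is disjoint from all the disks while having at least one disk strictly on each side), and let K be the convex hull of their union, with circumradius R_K. Then 2R_K ≤ 2(r₁ + ⋯ + r_m), i.e., the circumradius of K is at most the sum of the diameters of the disks. -/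
/-!
Let `S = ∑ rᵢ` and let `O` be the centre of mass of the centres `cᵢ` with weights `rᵢ`; we show
that every disk, hence `K`, lies in the ball of radius `S` about `O`. Projecting onto a unit
vector `u` turns the disks into intervals `[⟪cᵢ, u⟫ - rᵢ, ⟪cᵢ, u⟫ + rᵢ]`, and non-separability says
exactly that no point outside all of them has intervals on both sides. For such a gap-free family
every right endpoint is at most `⟪O, u⟫ + S`: two overlapping intervals are both contained in the
interval of radius `r_a + r_b` centred at their weighted centre, and replacing them by it keeps the
family gap-free and preserves the total radius and the weighted centre, so induction on the number
of intervals reduces to a single one. Taking `u` in the direction of `cₖ - O` gives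
`‖cₖ - O‖ + rₖ ≤ S`.
-/

open RealInnerProductSpace Metric

section Intervals

/-- A pair `p` stands for the interval `[p.1 - p.2, p.1 + p.2]`; thus `|a.1 - m.1| + a.2 ≤ m.2`
says that the interval of `a` lies in that of `m`. -/
def SplitsAt (s : Multiset (ℝ × ℝ)) (x : ℝ) : Prop :=
  (∀ p ∈ s, p.2 < |x - p.1|) ∧ (∃ p ∈ s, p.1 + p.2 < x) ∧ (∃ p ∈ s, x < p.1 - p.2)

noncomputable def radiusSum (s : Multiset (ℝ × ℝ)) : ℝ := (s.map Prod.snd).sum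

noncomputable def weightedCentre (s : Multiset (ℝ × ℝ)) : ℝ :=
  (s.map fun p => p.2 * p.1).sum / radiusSum s

noncomputable def mergeIntervals (a b : ℝ × ℝ) : ℝ × ℝ :=
  ((a.2 * a.1 + b.2 * b.1) / (a.2 + b.2), a.2 + b.2)

variable {a b m : ℝ × ℝ} {t : Multiset (ℝ × ℝ)}

lemma mergeIntervals_comm (a b : ℝ × ℝ) : mergeIntervals a b = mergeIntervals b a := by
  simp only [mergeIntervals, add_comm]

lemma abs_sub_mergeIntervals_fst_add_le (ha : 0 < a.2) (hb : 0 < b.2)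
    (hab : |a.1 - b.1| ≤ a.2 + b.2) :
    |a.1 - (mergeIntervals a b).1| + a.2 ≤ (mergeIntervals a b).2 := by
  have hs : 0 < a.2 + b.2 := add_pos ha hb
  have hdiff : a.1 - (mergeIntervals a b).1 = b.2 * (a.1 - b.1) / (a.2 + b.2) := by
    simp only [mergeIntervals]; field_simp; ring
  suffices |a.1 - (mergeIntervals a b).1| ≤ b.2 by simp only [mergeIntervals] at this ⊢; linarith
  rw [hdiff, abs_div, abs_mul, abs_of_pos hb, abs_of_pos hs, div_le_iff₀ hs]
  exact mul_le_mul_of_nonneg_left hab hb.le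

lemma radiusSum_mergeIntervals_cons :
    radiusSum (mergeIntervals a b ::ₘ t) = radiusSum (a ::ₘ b ::ₘ t) := by
  simp only [radiusSum, mergeIntervals, Multiset.map_cons, Multiset.sum_cons, add_assoc]

lemma weightedCentre_mergeIntervals_cons (hab : a.2 + b.2 ≠ 0) :
    weightedCentre (mergeIntervals a b ::ₘ t) = weightedCentre (a ::ₘ b ::ₘ t) := by
  rw [weightedCentre, weightedCentre, radiusSum_mergeIntervals_cons]
  congr 1
  simp only [mergeIntervals, Multiset.map_cons, Multiset.sum_cons]
  field_simp
  ring

lemma add_le_add_of_abs_sub_add_le (h : |a.1 - m.1| + a.2 ≤ m.2) : a.1 + a.2 ≤ m.1 + m.2 := by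
  linarith [le_abs_self (a.1 - m.1)]

lemma sub_le_sub_of_abs_sub_add_le (h : |a.1 - m.1| + a.2 ≤ m.2) : m.1 - m.2 ≤ a.1 - a.2 := by
  linarith [neg_abs_le (a.1 - m.1)]

lemma SplitsAt.cons_cons_of_abs_sub_add_le {x : ℝ} (ha : |a.1 - m.1| + a.2 ≤ m.2)
    (hb : |b.1 - m.1| + b.2 ≤ m.2) (h : SplitsAt (m ::ₘ t) x) : SplitsAt (a ::ₘ b ::ₘ t) x := by
  simp only [SplitsAt, Multiset.mem_cons, forall_eq_or_imp, exists_eq_or_imp] at h ⊢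
  obtain ⟨⟨hm, ht⟩, hbelow, habove⟩ := h
  refine ⟨⟨?_, ?_, ht⟩, ?_, ?_⟩
  · linarith [abs_sub_le x a.1 m.1]
  · linarith [abs_sub_le x b.1 m.1]
  · exact hbelow.imp (fun h => by linarith [add_le_add_of_abs_sub_add_le ha]) Or.inr
  · exact habove.imp (fun h => by linarith [sub_le_sub_of_abs_sub_add_le ha]) Or.inr

lemma exists_overlap_of_forall_not_splitsAt {q : ℝ × ℝ} (hpos : ∀ p ∈ t, 0 < p.2)
    (hmax : ∀ p ∈ t, p.1 + p.2 ≤ q.1 + q.2) (hns : ∀ x, ¬ SplitsAt (q ::ₘ t) x) (ht : t ≠ 0) :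
    ∃ b ∈ t, |q.1 - b.1| ≤ q.2 + b.2 := by
  by_contra! hgap
  have hleft : ∀ p ∈ t, p.1 + p.2 < q.1 - q.2 := by
    intro p hp
    have := hgap p hp
    rcases abs_cases (q.1 - p.1) with ⟨h, _⟩ | ⟨h, _⟩
    · linarith
    · linarith [hmax p hp, hpos p hp]
  obtain ⟨b, hb, hbmax⟩ := Multiset.exists_max_image (fun p : ℝ × ℝ => p.1 + p.2) ht
  have hbq := hleft b hb
  apply hns (((b.1 + b.2) + (q.1 - q.2)) / 2)
  refine ⟨?_, ⟨b, Multiset.mem_cons_of_mem hb, by linarith⟩,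
    ⟨q, Multiset.mem_cons_self _ _, by linarith⟩⟩
  simp only [Multiset.mem_cons, forall_eq_or_imp]
  refine ⟨by linarith [neg_le_abs (((b.1 + b.2) + (q.1 - q.2)) / 2 - q.1)], fun p hp => ?_⟩
  linarith [le_abs_self (((b.1 + b.2) + (q.1 - q.2)) / 2 - p.1), hbmax p hp]

theorem top_le_weightedCentre_add_radiusSum {s : Multiset (ℝ × ℝ)} (hpos : ∀ p ∈ s, 0 < p.2)
    (hns : ∀ x, ¬ SplitsAt s x) {p : ℝ × ℝ} (hp : p ∈ s) :
    p.1 + p.2 ≤ weightedCentre s + radiusSum s := by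
  obtain ⟨n, hn⟩ : ∃ n, Multiset.card s = n + 1 :=
    Nat.exists_eq_succ_of_ne_zero (Multiset.card_pos_iff_exists_mem.2 ⟨p, hp⟩).ne'
  induction n generalizing s p with
  | zero =>
    obtain ⟨q, rfl⟩ := Multiset.card_eq_one.mp hn
    rw [Multiset.mem_singleton] at hp
    subst hp
    have := hpos p (Multiset.mem_singleton_self p)
    simp only [weightedCentre, radiusSum, Multiset.map_singleton, Multiset.sum_singleton]
    field_simp
    rfl
  | succ n ih =>
    -- merge the interval reaching furthest right with one that it overlaps
    obtain ⟨q, hq, hqmax⟩ := Multiset.exists_max_image (fun p : ℝ × ℝ => p.1 + p.2)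
      (Multiset.card_pos.mp (by omega) : s ≠ 0)
    obtain ⟨t, rfl⟩ := Multiset.exists_cons_of_mem hq
    have ht : t ≠ 0 := by rintro rfl; simp at hn
    obtain ⟨b, hb, hqb⟩ := exists_overlap_of_forall_not_splitsAt
      (fun p hp => hpos p (Multiset.mem_cons_of_mem hp))
      (fun p hp => hqmax p (Multiset.mem_cons_of_mem hp)) hns ht
    obtain ⟨t', rfl⟩ := Multiset.exists_cons_of_mem hb
    have hq2 := hpos q (Multiset.mem_cons_self _ _)
    have hb2 := hpos b (by simp)
    have hqm := abs_sub_mergeIntervals_fst_add_le hq2 hb2 hqb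
    have hbm : |b.1 - (mergeIntervals q b).1| + b.2 ≤ (mergeIntervals q b).2 := by
      rw [mergeIntervals_comm]
      exact abs_sub_mergeIntervals_fst_add_le hb2 hq2 (by rwa [abs_sub_comm, add_comm])
    have hpos' : ∀ p ∈ mergeIntervals q b ::ₘ t', 0 < p.2 := by
      simp only [Multiset.mem_cons, forall_eq_or_imp]
      exact ⟨add_pos hq2 hb2, fun p hp => hpos p (by simp [hp])⟩
    have hns' : ∀ x, ¬ SplitsAt (mergeIntervals q b ::ₘ t') x :=
      fun x h => hns x (h.cons_cons_of_abs_sub_add_le hqm hbm)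
    have hcard : Multiset.card (mergeIntervals q b ::ₘ t') = n + 1 := by
      simp only [Multiset.card_cons] at hn ⊢; omega
    calc p.1 + p.2 ≤ q.1 + q.2 := hqmax p hp
      _ ≤ (mergeIntervals q b).1 + (mergeIntervals q b).2 := add_le_add_of_abs_sub_add_le hqm
      _ ≤ _ := ih hpos' hns' (Multiset.mem_cons_self _ _) hcard
      _ = _ := by
        rw [weightedCentre_mergeIntervals_cons (add_pos hq2 hb2).ne', radiusSum_mergeIntervals_cons]

end Intervals

lemma sInf_setOf_subset_closedBall_le {X : Type*} [PseudoMetricSpace X] {K : Set X}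
    (hK : K.Nonempty) {p : X} {R : ℝ} (hp : K ⊆ closedBall p R) :
    sInf {R : ℝ | ∃ p, K ⊆ closedBall p R} ≤ R :=
  csInf_le ⟨0, fun _ ⟨_, hq⟩ => nonempty_closedBall.mp (hK.mono hq)⟩ ⟨p, hp⟩

section Balls

variable {E ι : Type*} [NormedAddCommGroup E] [InnerProductSpace ℝ E] [Fintype ι]
  {c : ι → E} {r : ι → ℝ}

def IsNonSeparable (c : ι → E) (r : ι → ℝ) : Prop :=
  ¬ ∃ (u : E) (s : ℝ), ‖u‖ = 1 ∧
    (∀ i, ∀ x ∈ closedBall (c i) (r i), ⟪x, u⟫ ≠ s) ∧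
    (∃ i, ∀ x ∈ closedBall (c i) (r i), ⟪x, u⟫ < s) ∧
    (∃ j, ∀ x ∈ closedBall (c j) (r j), s < ⟪x, u⟫)

def projIntervals (c : ι → E) (r : ι → ℝ) (u : E) : Multiset (ℝ × ℝ) :=
  Finset.univ.val.map fun i => (⟪c i, u⟫, r i)

lemma abs_inner_sub_le_of_mem_closedBall {x y u : E} {ε : ℝ} (hu : ‖u‖ = 1)
    (hx : x ∈ closedBall y ε) : |⟪x, u⟫ - ⟪y, u⟫| ≤ ε := by
  rw [← inner_sub_left]
  calc |⟪x - y, u⟫| ≤ ‖x - y‖ * ‖u‖ := abs_real_inner_le_norm _ _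
    _ ≤ ε := by rw [hu, mul_one, ← dist_eq_norm]; exact hx

lemma IsNonSeparable.not_splitsAt_projIntervals (hNS : IsNonSeparable c r) {u : E} (hu : ‖u‖ = 1)
    (s : ℝ) : ¬ SplitsAt (projIntervals c r u) s := by
  rintro ⟨hmiss, ⟨_, hp, hleft⟩, ⟨_, hq, hright⟩⟩
  simp only [projIntervals, Multiset.mem_map, Finset.mem_val, Finset.mem_univ, true_and,
    forall_exists_index, forall_apply_eq_imp_iff] at hmiss hp hq
  obtain ⟨i, rfl⟩ := hp
  obtain ⟨j, rfl⟩ := hq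
  refine hNS ⟨u, s, hu, fun k x hx hxs => ?_, ⟨i, fun x hx => ?_⟩, ⟨j, fun x hx => ?_⟩⟩
  · have := hmiss k
    rw [← hxs] at this
    linarith [abs_inner_sub_le_of_mem_closedBall hu hx, abs_sub_comm ⟪x, u⟫ ⟪c k, u⟫]
  · linarith [le_abs_self (⟪x, u⟫ - ⟪c i, u⟫), abs_inner_sub_le_of_mem_closedBall hu hx]
  · linarith [neg_abs_le (⟪x, u⟫ - ⟪c j, u⟫), abs_inner_sub_le_of_mem_closedBall hu hx]

lemma radiusSum_projIntervals (u : E) : radiusSum (projIntervals c r u) = ∑ i, r i := by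
  simp only [radiusSum, projIntervals, Multiset.map_map, Function.comp_def]
  rfl

lemma weightedCentre_projIntervals (u : E) :
    weightedCentre (projIntervals c r u) = ⟪Finset.univ.centerMass r c, u⟫ := by
  rw [weightedCentre, radiusSum_projIntervals, Finset.centerMass, real_inner_smul_left, sum_inner,
    div_eq_inv_mul]
  simp only [projIntervals, Multiset.map_map, Function.comp_def, real_inner_smul_left]
  rfl

lemma IsNonSeparable.inner_sub_centerMass_add_le (hNS : IsNonSeparable c r) (hr : ∀ i, 0 < r i)
    {u : E} (hu : ‖u‖ = 1) (k : ι) :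
    ⟪c k - Finset.univ.centerMass r c, u⟫ + r k ≤ ∑ i, r i := by
  have := top_le_weightedCentre_add_radiusSum (s := projIntervals c r u)
    (by simp [projIntervals, hr]) (hNS.not_splitsAt_projIntervals hu)
    (p := (⟪c k, u⟫, r k)) (Multiset.mem_map_of_mem _ (Finset.mem_univ_val k))
  rw [weightedCentre_projIntervals, radiusSum_projIntervals] at this
  rw [inner_sub_left]
  linarith

lemma IsNonSeparable.dist_centerMass_add_le (hNS : IsNonSeparable c r) (hr : ∀ i, 0 < r i)
    (k : ι) : dist (c k) (Finset.univ.centerMass r c) + r k ≤ ∑ i, r i := by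
  rw [dist_eq_norm]
  set v := c k - Finset.univ.centerMass r c
  by_cases hv : v = 0
  · rw [hv, norm_zero, zero_add]
    exact Finset.single_le_sum (fun i _ => (hr i).le) (Finset.mem_univ k)
  · have hinner : ⟪v, ‖v‖⁻¹ • v⟫ = ‖v‖ := by
      rw [real_inner_smul_right, real_inner_self_eq_norm_sq]
      field_simp [norm_ne_zero_iff.mpr hv]
    rw [← hinner]
    exact hNS.inner_sub_centerMass_add_le hr (norm_smul_inv_norm hv) k

theorem IsNonSeparable.convexHull_subset_closedBall (hNS : IsNonSeparable c r)
    (hr : ∀ i, 0 < r i) :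
    convexHull ℝ (⋃ i, closedBall (c i) (r i)) ⊆
      closedBall (Finset.univ.centerMass r c) (∑ i, r i) := by
  refine convexHull_min (Set.iUnion_subset fun k => ?_) (convex_closedBall _ _)
  exact closedBall_subset_closedBall' (by linarith [hNS.dist_centerMass_add_le hr k])

end Balls

/-- Goodman–Goodman inequality (inequality (8)): if closed disks with centers `c i` and
radii `rad i` form a non-separable arrangement in `ℝ²`, and `K` is the convex hull of their
union, then twice the circumradius of `K` is at most the sum of the diameters of the disks. -/
theorem circumradius_le_sum_diameters (m : ℕ) (hm : 0 < m)
    (c : Fin m → EuclideanSpace ℝ (Fin 2)) (rad : Fin m → ℝ) (hrad : ∀ i, 0 < rad i)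
    (hNS : ¬ ∃ (u : EuclideanSpace ℝ (Fin 2)) (s : ℝ), ‖u‖ = 1 ∧
      (∀ i, ∀ x ∈ Metric.closedBall (c i) (rad i), ⟪x, u⟫ ≠ s) ∧
      (∃ i, ∀ x ∈ Metric.closedBall (c i) (rad i), ⟪x, u⟫ < s) ∧
      (∃ j, ∀ x ∈ Metric.closedBall (c j) (rad j), s < ⟪x, u⟫)) :
    2 * sInf {R : ℝ | ∃ p,
        convexHull ℝ (⋃ i, Metric.closedBall (c i) (rad i)) ⊆ Metric.closedBall p R} ≤
      2 * ∑ i, rad i := by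
  have hK : (convexHull ℝ (⋃ i, closedBall (c i) (rad i))).Nonempty :=
    ⟨c ⟨0, hm⟩, subset_convexHull ℝ _ <|
      Set.mem_iUnion_of_mem _ (mem_closedBall_self (hrad _).le)⟩
  have hle := sInf_setOf_subset_closedBall_le hK
    (IsNonSeparable.convexHull_subset_closedBall hNS hrad)
  linarith
end
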